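/- If ‖I - QᵀQ‖₂ ≤ ω with 0 ≤ ω < 1, then for every matrix U of compatible dimensions, ‖Uᵀ Q Qᵀ (I - Q Qᵀ) U‖₂ ≤ 2ω ‖U‖₂². -/

import Mathlib

open Matrix

/-- Spectral norm (largest singular value) of a real matrix. -/
noncomputable def sn {m n : ℕ} (A : Matrix (Fin m) (Fin n) ℝ) : ℝ :=
  sSup {c | ∃ x : EuclideanSpace ℝ (Fin n), ‖x‖ = 1 ∧
    c = ‖(WithLp.equiv 2 (Fin m → ℝ)).symm (A.mulVec ((WithLp.equiv 2 (Fin n → ℝ)) x))‖}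

/-- Smallest singular value of a real matrix. -/
noncomputable def smin {m n : ℕ} (A : Matrix (Fin m) (Fin n) ℝ) : ℝ :=
  sInf {c | ∃ x : EuclideanSpace ℝ (Fin n), ‖x‖ = 1 ∧
    c = ‖(WithLp.equiv 2 (Fin m → ℝ)).symm (A.mulVec ((WithLp.equiv 2 (Fin n → ℝ)) x))‖}

/-- Smallest eigenvalue (Rayleigh quotient infimum) of a square real matrix. -/
noncomputable def lmin {n : ℕ} (A : Matrix (Fin n) (Fin n) ℝ) : ℝ :=
  sInf {c | ∃ x : EuclideanSpace ℝ (Fin n), ‖x‖ = 1 ∧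
    c = (inner ℝ x ((WithLp.equiv 2 (Fin n → ℝ)).symm (A.mulVec ((WithLp.equiv 2 (Fin n → ℝ)) x))) : ℝ)}

/-! With `E = 1 - QᵀQ` and `V = QᵀU`, the matrix in question is the congruence `Vᵀ E V`, so its
norm is at most `‖E‖ ‖Q‖² ‖U‖²`. The C⋆-identity `‖Q‖² = ‖QᵀQ‖ = ‖1 - E‖ ≤ 1 + ω` bounds `‖Q‖²`
by `2`, since `ω < 1`. -/

open scoped Matrix.Norms.L2Operator

namespace Matrix

variable {m n : Type*} [Fintype m] [Fintype n]

lemma l2_opNorm_one_le {𝕜 : Type*} [RCLike 𝕜] [DecidableEq n] : ‖(1 : Matrix n n 𝕜)‖ ≤ 1 := by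
  rw [cstar_norm_def, map_one]
  exact ContinuousLinearMap.norm_id_le

lemma l2_opNorm_transpose [DecidableEq m] [DecidableEq n] (A : Matrix m n ℝ) : ‖Aᵀ‖ = ‖A‖ := by
  rw [← conjTranspose_eq_transpose_of_trivial, l2_opNorm_conjTranspose]

lemma l2_opNorm_transpose_mul_self [DecidableEq n] (A : Matrix m n ℝ) : ‖Aᵀ * A‖ = ‖A‖ * ‖A‖ := by
  rw [← conjTranspose_eq_transpose_of_trivial, l2_opNorm_conjTranspose_mul_self]

lemma l2_opNorm_transpose_mul_mul_le [DecidableEq m] [DecidableEq n]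
    (A : Matrix m n ℝ) (B : Matrix m m ℝ) :
    ‖Aᵀ * B * A‖ ≤ ‖B‖ * ‖A‖ ^ 2 :=
  calc ‖Aᵀ * B * A‖ ≤ ‖Aᵀ‖ * ‖B‖ * ‖A‖ :=
        (l2_opNorm_mul _ _).trans (by gcongr; exact l2_opNorm_mul _ _)
    _ = ‖B‖ * ‖A‖ ^ 2 := by rw [l2_opNorm_transpose]; ring

lemma l2_opNorm_sq_le_one_add [DecidableEq m] [DecidableEq n] (Q : Matrix m n ℝ) :
    ‖Q‖ ^ 2 ≤ 1 + ‖1 - Qᵀ * Q‖ :=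
  calc ‖Q‖ ^ 2 = ‖1 - (1 - Qᵀ * Q)‖ := by rw [sub_sub_cancel, l2_opNorm_transpose_mul_self, sq]
    _ ≤ ‖(1 : Matrix n n ℝ)‖ + ‖1 - Qᵀ * Q‖ := norm_sub_le _ _
    _ ≤ 1 + ‖1 - Qᵀ * Q‖ := by gcongr; exact l2_opNorm_one_le

lemma transpose_mul_mul_transpose_mul_one_sub {R : Type*} [CommRing R] {k : Type*} [Fintype k]
    [DecidableEq m] [DecidableEq n] (Q : Matrix m n R) (U : Matrix m k R) :
    Uᵀ * Q * Qᵀ * (1 - Q * Qᵀ) * U = (Qᵀ * U)ᵀ * (1 - Qᵀ * Q) * (Qᵀ * U) := by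
  simp only [transpose_mul, transpose_transpose, Matrix.mul_sub, Matrix.sub_mul, Matrix.mul_one,
    Matrix.mul_assoc]

end Matrix

lemma sn_eq_l2_opNorm {m n : ℕ} (A : Matrix (Fin m) (Fin n) ℝ) : sn A = ‖A‖ := by
  rw [l2_opNorm_def, ← ContinuousLinearMap.sSup_sphere_eq_norm, sn]
  congr 1
  ext c
  simp [eq_comm, toLpLin_apply]

theorem cross_term_bound_general
    {m t s : ℕ} (Q : Matrix (Fin m) (Fin t) ℝ) (ω : ℝ)
    (hω1 : ω < 1)
    (h : sn ((1 : Matrix (Fin t) (Fin t) ℝ) - Qᵀ * Q) ≤ ω)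
    (U : Matrix (Fin m) (Fin s) ℝ) :
    sn (Uᵀ * Q * Qᵀ * ((1 : Matrix (Fin m) (Fin m) ℝ) - Q * Qᵀ) * U)
      ≤ 2 * ω * (sn U) ^ 2 := by
  simp only [sn_eq_l2_opNorm] at h ⊢
  have hω0 : 0 ≤ ω := (norm_nonneg _).trans h
  have hQ : ‖Q‖ ^ 2 ≤ 2 := by linarith [l2_opNorm_sq_le_one_add Q]
  have hQU : ‖Qᵀ * U‖ ≤ ‖Q‖ * ‖U‖ := (l2_opNorm_mul _ _).trans_eq (by rw [l2_opNorm_transpose])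
  calc ‖Uᵀ * Q * Qᵀ * (1 - Q * Qᵀ) * U‖
      = ‖(Qᵀ * U)ᵀ * (1 - Qᵀ * Q) * (Qᵀ * U)‖ := by
        rw [transpose_mul_mul_transpose_mul_one_sub]
    _ ≤ ‖1 - Qᵀ * Q‖ * ‖Qᵀ * U‖ ^ 2 := l2_opNorm_transpose_mul_mul_le _ _
    _ ≤ ω * (‖Q‖ * ‖U‖) ^ 2 := by gcongr
    _ = ‖Q‖ ^ 2 * (ω * ‖U‖ ^ 2) := by ring
    _ ≤ 2 * (ω * ‖U‖ ^ 2) := by gcongr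
    _ = 2 * ω * ‖U‖ ^ 2 := by ring

theorem cross_term_bound
    {m t s : ℕ} (Q : Matrix (Fin m) (Fin t) ℝ) (ω : ℝ)
    (hω0 : 0 ≤ ω) (hω1 : ω < 1)
    (h : sn ((1 : Matrix (Fin t) (Fin t) ℝ) - Qᵀ * Q) ≤ ω)
    (U : Matrix (Fin m) (Fin s) ℝ) :
    sn (Uᵀ * Q * Qᵀ * ((1 : Matrix (Fin m) (Fin m) ℝ) - Q * Qᵀ) * U)
      ≤ 2 * ω * (sn U) ^ 2 :=
  cross_term_bound_general Q ω hω1 h U
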